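/- There exists a set P ⊆ ℕ such that the spacing shift σ_P : Σ_P → Σ_P is multi-transitive but not syndetically transitive. -/

import Mathlib

open Set Function

/-- A continuous self-map is topologically transitive if every pair of nonempty
open sets is connected by some positive iterate. -/
def TopTransitive {X : Type*} [TopologicalSpace X] (f : X → X) : Prop :=
  ∀ U V : Set X, IsOpen U → IsOpen V → U.Nonempty → V.Nonempty →
    ∃ n : ℕ, 0 < n ∧ (f^[n] '' U ∩ V).Nonempty

/-- The map `f^{(∗m)} = f × f² × ⋯ × f^m` acting on `X^m` (coordinates indexed by `Fin m`,
where coordinate `i` is moved by `f^[i+1]`). -/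
def starMap {X : Type*} (f : X → X) (m : ℕ) : (Fin m → X) → (Fin m → X) :=
  fun x i => f^[(i : ℕ) + 1] (x i)

/-- `f` is weakly mixing if `f × f` is topologically transitive. -/
def WeaklyMixing {X : Type*} [TopologicalSpace X] (f : X → X) : Prop :=
  TopTransitive (fun p : X × X => (f p.1, f p.2))

/-- `f` is multi-transitive if `f × f² × ⋯ × f^m` is topologically transitive
for every `m ≥ 1`. -/
def MultiTransitive {X : Type*} [TopologicalSpace X] (f : X → X) : Prop :=
  ∀ m : ℕ, 1 ≤ m → TopTransitive (starMap f m)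

/-- `f` is Δ-transitive if for each `m ≥ 1` there is a residual set `Y ⊆ X` such that
for every `x ∈ Y` the diagonal tuple `(x, …, x)` has dense orbit under `f × f² × ⋯ × f^m`. -/
def DeltaTransitive {X : Type*} [TopologicalSpace X] (f : X → X) : Prop :=
  ∀ m : ℕ, 1 ≤ m → ∃ Y : Set X, Y ∈ residual X ∧
    ∀ x ∈ Y, Dense (Set.range fun n : ℕ => (starMap f m)^[n] (fun _ : Fin m => x))

/-- A set `S ⊆ ℕ` is syndetic if there is `L > 0` with `[n, n+L] ∩ S ≠ ∅` for every `n`. -/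
def Syndetic (S : Set ℕ) : Prop :=
  ∃ L : ℕ, 0 < L ∧ ∀ n : ℕ, ∃ k ∈ S, n ≤ k ∧ k ≤ n + L

/-- `N(U,V;f) = {n > 0 : f^n(U) ∩ V ≠ ∅}`. -/
def NSet {X : Type*} (f : X → X) (U V : Set X) : Set ℕ :=
  {n | 0 < n ∧ (f^[n] '' U ∩ V).Nonempty}

/-- `f` is syndetically transitive if `N(U,V;f)` is syndetic for all nonempty open `U, V`. -/
def SyndeticallyTransitive {X : Type*} [TopologicalSpace X] (f : X → X) : Prop :=
  ∀ U V : Set X, IsOpen U → IsOpen V → U.Nonempty → V.Nonempty → Syndetic (NSet f U V)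

/-- `f` is strongly transitive if for every nonempty open `U` there is `M > 0` with
`⋃_{j=1}^M f^j(U) = X`. -/
def StronglyTransitive {X : Type*} [TopologicalSpace X] (f : X → X) : Prop :=
  ∀ U : Set X, IsOpen U → U.Nonempty →
    ∃ M : ℕ, 0 < M ∧ (⋃ j ∈ Finset.Icc 1 M, f^[j] '' U) = Set.univ

/-- `f` is minimal if the only nonempty closed `f`-invariant subset is the whole space. -/
def MinimalMap {X : Type*} [TopologicalSpace X] (f : X → X) : Prop :=
  ∀ K : Set X, IsClosed K → K.Nonempty → f '' K ⊆ K → K = Set.univ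

/-- The spacing shift `Σ_P ⊆ {0,1}^ℕ`: all sequences such that whenever two distinct
positions carry the symbol `1`, the distance between them lies in `P`. -/
def SpacingSubshift (P : Set ℕ) : Set (ℕ → Bool) :=
  {x | ∀ i j : ℕ, i < j → x i = true → x j = true → j - i ∈ P}

theorem shift_mem_spacingSubshift {P : Set ℕ} {x : ℕ → Bool}
    (hx : x ∈ SpacingSubshift P) : (fun n => x (n + 1)) ∈ SpacingSubshift P := by
  intro i j hij hi hj
  have h := hx (i + 1) (j + 1) (by omega) hi hj
  have : j + 1 - (i + 1) = j - i := by omega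
  rwa [this] at h

/-- The shift map `σ_P : Σ_P → Σ_P` of the spacing shift. -/
def sigmaP (P : Set ℕ) : SpacingSubshift P → SpacingSubshift P :=
  fun x => ⟨fun n => x.1 (n + 1), shift_mem_spacingSubshift x.2⟩

/-- The cylinder `[1]_P` of points of `Σ_P` whose 0th coordinate is `1`. -/
def oneCyl (P : Set ℕ) : Set (SpacingSubshift P) := {x | x.1 0 = true}

/-- A set `P ⊆ ℕ` is thick if it contains arbitrarily long intervals of
consecutive integers. -/
def Thick (P : Set ℕ) : Prop :=
  ∀ n : ℕ, ∃ k : ℕ, Set.Ico k (k + n) ⊆ P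

/-- `P(m) = ⋃_{k ≥ 1} {m^{2k-1}, …, m^{2k} - 1}`. -/
def ProgressionSet (m : ℕ) : Set ℕ :=
  {n | ∃ k : ℕ, 1 ≤ k ∧ m ^ (2 * k - 1) ≤ n ∧ n < m ^ (2 * k)}

/-!
Splicing makes `σ_P` multi-transitive as soon as, for all `m` and `M`, some `n > M` has the
windows `(i n - M, i n + M)`, `1 ≤ i ≤ m`, inside `P`: the sequence carrying the first `M`
symbols of `uᵢ` at `0`, those of `vᵢ` at `i n`, and zeros elsewhere lies in `Σ_P`, since the
distance between a `1` of the first word and a `1` of the second lies in that window; its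
`(i n)`-th shift starts with the word of `vᵢ`. Conversely, a point of the cylinder `[1]` whose
`n`-th shift is again in `[1]` has `1`s at `0` and `n`, so `N([1], [1]) ⊆ P` and `σ_P` is not
syndetically transitive when `P` has arbitrarily long gaps. The union of the blocks
`[k!, k · k!]` has both properties.
-/

open Filter Topology Nat

theorem hasBasis_nhds_cylinder {E : Type*} [TopologicalSpace E] [DiscreteTopology E]
    (x : ℕ → E) : (𝓝 x).HasBasis (fun _ : ℕ => True) fun N => {y | ∀ t < N, y t = x t} := by
  rw [nhds_pi]
  simp only [nhds_discrete]
  refine (hasBasis_pi_pure x).to_hasBasis (fun I hI => ?_) fun N _ => ⟨Iio N, finite_Iio N, ?_⟩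
  · obtain ⟨N, hN⟩ := hI.bddAbove
    exact ⟨N + 1, trivial, fun y hy t ht => hy t (Nat.lt_succ_of_le (hN ht))⟩
  · exact fun y hy t ht => hy t ht

theorem hasBasis_nhds_pi_subtype_cylinder {E ι : Type*} [TopologicalSpace E] [DiscreteTopology E]
    [Finite ι] {S : Set (ℕ → E)} (u : ι → S) :
    (𝓝 u).HasBasis (fun _ : ℕ => True)
      fun N => {x | ∀ i, ∀ t < N, (x i).1 t = (u i).1 t} := by
  have hcyl (i : ι) : (𝓝 (u i)).HasBasis (fun _ : ℕ => True)
      fun N => {y : S | ∀ t < N, y.1 t = (u i).1 t} := by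
    rw [nhds_subtype]
    exact (hasBasis_nhds_cylinder (u i).1).comap _
  rw [nhds_pi]
  refine (hasBasis_pi_same_index hcyl fun I k hI _ => ?_).to_hasBasis
    (fun ⟨_, N⟩ _ => ⟨N, trivial, fun x hx i _ => hx i⟩)
    fun N _ => ⟨(univ, N), ⟨finite_univ, trivial⟩, fun x hx i t ht => hx i (mem_univ i) t ht⟩
  obtain ⟨N, hN⟩ := (hI.image k).bddAbove
  exact ⟨N, trivial, fun i hi y hy t ht => hy t (ht.trans_le (hN (mem_image_of_mem k hi)))⟩

theorem sigmaP_iterate_apply (P : Set ℕ) (n : ℕ) (x : SpacingSubshift P) (t : ℕ) :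
    ((sigmaP P)^[n] x).1 t = x.1 (t + n) := by
  induction n generalizing x with
  | zero => rfl
  | succ n ih => rw [iterate_succ_apply, ih]; rfl

theorem starMap_iterate_apply {X : Type*} (f : X → X) (m n : ℕ) (x : Fin m → X) (i : Fin m) :
    (starMap f m)^[n] x i = f^[(i + 1) * n] (x i) := by
  induction n generalizing x with
  | zero => rfl
  | succ n ih =>
    rw [iterate_succ_apply, ih, starMap, ← iterate_add_apply]
    ring_nf

def splice (u v : ℕ → Bool) (N s : ℕ) : ℕ → Bool :=
  fun t => if t < N then u t else if s ≤ t ∧ t < s + N then v (t - s) else false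

theorem splice_mem_spacingSubshift {P : Set ℕ} {u v : ℕ → Bool} (hu : u ∈ SpacingSubshift P)
    (hv : v ∈ SpacingSubshift P) {N s : ℕ} (hNs : N ≤ s) (hP : Ioo (s - N) (s + N) ⊆ P) :
    splice u v N s ∈ SpacingSubshift P := by
  intro i j hij hi hj
  simp only [splice] at hi hj
  split_ifs at hi hj <;> try contradiction
  · exact hu i j hij hi hj
  · exact hP ⟨by omega, by omega⟩
  · omega
  · have h := hv (i - s) (j - s) (by omega) hi hj
    rwa [show j - s - (i - s) = j - i by omega] at h

theorem multiTransitive_sigmaP_of_forall_exists_Ioo_subset {P : Set ℕ}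
    (hP : ∀ m M : ℕ, ∃ n, M < n ∧ ∀ i, 1 ≤ i → i ≤ m → Ioo (i * n - M) (i * n + M) ⊆ P) :
    MultiTransitive (sigmaP P) := by
  intro m _ U V hUo hVo ⟨u, hu⟩ ⟨v, hv⟩
  obtain ⟨N₁, -, hN₁⟩ := (hasBasis_nhds_pi_subtype_cylinder u).mem_iff.1 (hUo.mem_nhds hu)
  obtain ⟨N₂, -, hN₂⟩ := (hasBasis_nhds_pi_subtype_cylinder v).mem_iff.1 (hVo.mem_nhds hv)
  obtain ⟨M, hM₁, hM₂⟩ : ∃ M, N₁ ≤ M ∧ N₂ ≤ M := ⟨max N₁ N₂, le_max_left _ _, le_max_right _ _⟩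
  obtain ⟨n, hMn, hn⟩ := hP m M
  have hle (i : Fin m) : M ≤ (i + 1) * n := hMn.le.trans (Nat.le_mul_of_pos_left n i.succ_pos)
  let x : Fin m → SpacingSubshift P := fun i =>
    ⟨splice (u i).1 (v i).1 M ((i + 1) * n),
      splice_mem_spacingSubshift (u i).2 (v i).2 (hle i) (hn _ i.succ_pos i.isLt)⟩
  have hxU : x ∈ U := hN₁ fun i t ht => by
    simp only [x, splice, if_pos (ht.trans_le hM₁)]
  have hxV : (starMap (sigmaP P) m)^[n] x ∈ V := hN₂ fun i t ht => by
    have htM : t < M := ht.trans_le hM₂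
    rw [starMap_iterate_apply, sigmaP_iterate_apply]
    simp only [x, splice]
    rw [if_neg (by have := hle i; omega), if_pos (by omega), Nat.add_sub_cancel]
  exact ⟨n, by omega, _, mem_image_of_mem _ hxU, hxV⟩

theorem Syndetic.mono {S T : Set ℕ} (hS : Syndetic S) (hST : S ⊆ T) : Syndetic T :=
  let ⟨L, hL, h⟩ := hS
  ⟨L, hL, fun n => let ⟨k, hk, hnk, hkL⟩ := h n; ⟨k, hST hk, hnk, hkL⟩⟩

theorem isOpen_oneCyl (P : Set ℕ) : IsOpen (oneCyl P) :=
  have : Continuous fun x : SpacingSubshift P => x.1 0 :=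
    (continuous_apply 0).comp continuous_subtype_val
  (isOpen_discrete {true}).preimage this

theorem oneCyl_nonempty (P : Set ℕ) : (oneCyl P).Nonempty :=
  ⟨⟨fun t => decide (t = 0), fun i j hij hi hj => by simp_all⟩, rfl⟩

theorem nSet_oneCyl_subset (P : Set ℕ) : NSet (sigmaP P) (oneCyl P) (oneCyl P) ⊆ P := by
  rintro n ⟨hn, _, ⟨x, hx0, rfl⟩, hxn⟩
  have hxn : x.1 n = true := by simpa [oneCyl, sigmaP_iterate_apply] using hxn
  simpa using x.2 0 n hn hx0 hxn

theorem not_syndeticallyTransitive_sigmaP {P : Set ℕ} (hP : ¬ Syndetic P) :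
    ¬ SyndeticallyTransitive (sigmaP P) := fun h =>
  hP <| (h _ _ (isOpen_oneCyl P) (isOpen_oneCyl P) (oneCyl_nonempty P) (oneCyl_nonempty P)).mono
    (nSet_oneCyl_subset P)

def factorialBlocks : Set ℕ := ⋃ k, Icc k ! (k * k !)

theorem le_or_le_of_mem_factorialBlocks {j : ℕ} (hj : j ∈ factorialBlocks) (k : ℕ) :
    j ≤ k * k ! ∨ (k + 1)! ≤ j := by
  obtain ⟨l, hlj, hjl⟩ := mem_iUnion.1 hj
  rcases le_or_gt l k with hlk | hkl
  · exact .inl (hjl.trans (Nat.mul_le_mul hlk (factorial_le hlk)))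
  · exact .inr ((factorial_le hkl).trans hlj)

theorem not_syndetic_factorialBlocks : ¬ Syndetic factorialBlocks := by
  rintro ⟨L, -, h⟩
  obtain ⟨j, hj, hlo, hhi⟩ := h ((L + 2) * (L + 2)! + 1)
  have hL : L + 2 ≤ (L + 2)! := self_le_factorial _
  rcases le_or_le_of_mem_factorialBlocks hj (L + 2) with hj' | hj'
  · omega
  · rw [factorial_succ, add_mul, one_mul] at hj'
    omega

theorem exists_Ioo_subset_factorialBlocks (m M : ℕ) :
    ∃ n, M < n ∧ ∀ i, 1 ≤ i → i ≤ m → Ioo (i * n - M) (i * n + M) ⊆ factorialBlocks := by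
  set k := (m + 1) * (M + 1)
  have hk : k ≤ k ! := self_le_factorial k
  refine ⟨k ! + M, by have := factorial_pos k; omega, fun i hi1 him d ⟨hd₁, hd₂⟩ => ?_⟩
  refine mem_iUnion.2 ⟨k, ?_, ?_⟩
  · have : k ! + M ≤ i * (k ! + M) := Nat.le_mul_of_pos_left _ hi1
    omega
  · have him' : i * (k ! + M) ≤ m * (k ! + M) := Nat.mul_le_mul_right _ him
    have hMk : (m + 1) * M ≤ k := Nat.mul_le_mul_left _ M.le_succ
    have hmk : (m + 1) * k ! ≤ k * k ! :=
      Nat.mul_le_mul_right _ (Nat.le_mul_of_pos_right _ M.succ_pos)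
    linarith

/-- There is a set `P ⊆ ℕ` such that the spacing shift `σ_P` is
multi-transitive but not syndetically transitive. -/
theorem statement10 :
    ∃ P : Set ℕ, MultiTransitive (sigmaP P) ∧ ¬ SyndeticallyTransitive (sigmaP P) :=
  ⟨factorialBlocks,
    multiTransitive_sigmaP_of_forall_exists_Ioo_subset exists_Ioo_subset_factorialBlocks,
    not_syndeticallyTransitive_sigmaP not_syndetic_factorialBlocks⟩
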